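/- arXiv:2112.02673 — 6 statements merged into one kernel-verified Lean document; each statement's English description precedes it below -/
import Mathlib

section
/- Given a short exact sequence of groups 1 → G₁ → G₂ → G₃ → 1, if G₁ is Jordan and G₃ has bounded finite subgroups, then G₂ is Jordan. -/
/-- `G` is Jordan with constant `J`: every finite subgroup of `G` contains a
normal abelian subgroup of index at most `J`. -/
def JordanGroupWith (G : Type*) [Group G] (J : ℕ) : Prop :=
  ∀ H : Subgroup G, Finite H →
    ∃ A : Subgroup H, A.Normal ∧ (∀ x y : A, x * y = y * x) ∧ A.index ≤ J

/-- `G` is Jordan. -/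
def JordanGroup (G : Type*) [Group G] : Prop := ∃ J : ℕ, JordanGroupWith G J

/-- Every finite subgroup of `G` has order at most `B`. -/
def HasBoundedFiniteSubgroupsWith (G : Type*) [Group G] (B : ℕ) : Prop :=
  ∀ H : Subgroup G, Finite H → Nat.card H ≤ B

/-- `G` has bounded finite subgroups. -/
def HasBoundedFiniteSubgroups (G : Type*) [Group G] : Prop :=
  ∃ B : ℕ, HasBoundedFiniteSubgroupsWith G B

theorem stmt_1 (G₁ G₂ G₃ : Type*) [Group G₁] [Group G₂] [Group G₃]
    (f : G₁ →* G₂) (g : G₂ →* G₃)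
    (hf : Function.Injective f) (hg : Function.Surjective g)
    (hexact : f.range = g.ker)
    (h₁ : JordanGroup G₁) (h₃ : HasBoundedFiniteSubgroups G₃) :
    JordanGroup G₂ := by
  obtain ⟨J, hJ⟩ := h₁
  obtain ⟨B, hB⟩ := h₃
  refine ⟨(B * J).factorial, fun H hH => ?_⟩
  haveI : Finite H := hH
  -- K = kernel of g restricted to H
  set K : Subgroup H := (g.comp H.subtype).ker with hKdef
  -- K has index ≤ B in H
  haveI : Finite ((g.comp H.subtype).range) :=
    Finite.of_surjective _ (g.comp H.subtype).rangeRestrict_surjective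
  have hKindex : K.index ≤ B := by
    rw [hKdef, Subgroup.index_ker]
    exact hB _ inferInstance
  -- K maps into f.range
  have hKrange : Subgroup.map H.subtype K ≤ f.range := by
    intro x hx
    obtain ⟨⟨x, hxH⟩, hxK, rfl⟩ := hx
    rw [hexact]
    exact hxK
  -- S = preimage of K in G₁
  set S : Subgroup G₁ := Subgroup.comap f (Subgroup.map H.subtype K) with hSdef
  have hmapS : Subgroup.map f S = Subgroup.map H.subtype K := by
    rw [hSdef, Subgroup.map_comap_eq, inf_eq_right.mpr hKrange]
  -- K ≃* S
  have eKS : K ≃* S :=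
    (K.equivMapOfInjective H.subtype H.subtype_injective).trans
      ((MulEquiv.subgroupCongr hmapS).symm.trans
        (S.equivMapOfInjective f hf).symm)
  haveI : Finite S := Finite.of_equiv K eKS.toEquiv
  obtain ⟨AS, hASnorm, hAScomm, hASind⟩ := hJ S inferInstance
  -- pull AS back to a subgroup of K
  set A₀ : Subgroup K := Subgroup.comap eKS.toMonoidHom AS with hA₀def
  have hA₀norm : A₀.Normal := hASnorm.comap eKS.toMonoidHom
  have hA₀ind : A₀.index ≤ J := by
    rw [hA₀def, Subgroup.index_comap_of_surjective _ eKS.surjective]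
    exact hASind
  have hA₀comm : ∀ a b : K, a ∈ A₀ → b ∈ A₀ → a * b = b * a := by
    intro a b ha hb
    apply eKS.injective
    rw [map_mul, map_mul]
    have := hAScomm ⟨eKS a, ha⟩ ⟨eKS b, hb⟩
    exact congrArg Subtype.val this
  -- push A₀ to a subgroup of H and take its normal core
  set A₁ : Subgroup H := Subgroup.map K.subtype A₀ with hA₁def
  have hA₁ind : A₁.index ≤ B * J := by
    rw [hA₁def, Subgroup.index_map_subtype]
    calc A₀.index * K.index ≤ J * B := Nat.mul_le_mul hA₀ind hKindex
    _ = B * J := Nat.mul_comm _ _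
  refine ⟨A₁.normalCore, A₁.normalCore_normal, ?_, ?_⟩
  · -- abelian: normalCore ≤ A₁ which is abelian
    intro x y
    apply Subtype.ext
    have hx : (x : H) ∈ A₁ := A₁.normalCore_le x.2
    have hy : (y : H) ∈ A₁ := A₁.normalCore_le y.2
    obtain ⟨a, ha, hax⟩ := hx
    obtain ⟨b, hb, hby⟩ := hy
    show (x : H) * (y : H) = (y : H) * (x : H)
    rw [← hax, ← hby]
    have := hA₀comm a b ha hb
    calc (K.subtype a) * (K.subtype b) = K.subtype (a * b) := (map_mul _ _ _).symm
      _ = K.subtype (b * a) := by rw [this]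
      _ = (K.subtype b) * (K.subtype a) := map_mul _ _ _
  · -- index bound
    rw [Subgroup.normalCore_eq_ker, Subgroup.index_ker]
    haveI : Finite (H ⧸ A₁) := Quotient.finite _
    haveI := Fintype.ofFinite (H ⧸ A₁)
    haveI : DecidableEq (H ⧸ A₁) := Classical.decEq _
    calc Nat.card (MulAction.toPermHom H (H ⧸ A₁)).range
        ≤ Nat.card (Equiv.Perm (H ⧸ A₁)) := Subgroup.card_le_card_group _
      _ = (Nat.card (H ⧸ A₁)).factorial := by
          rw [Nat.card_eq_fintype_card, Nat.card_eq_fintype_card, Fintype.card_perm]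
      _ ≤ (B * J).factorial := Nat.factorial_le (by rw [← Subgroup.index_eq_card]; exact hA₁ind)
end

section
/- Equivalently phrased: if N is a normal subgroup of a group G such that N is Jordan and the quotient G/N has bounded finite subgroups, then G is Jordan. -/
/-- A finite group embedding into a Jordan-with-`J` group has a normal abelian
subgroup of index at most `J`. -/
lemma jordan_pull {K N : Type*} [Group K] [Group N] [Finite K] {J : ℕ}
    (hN : JordanGroupWith N J) (f : K →* N) (hf : Function.Injective f) :
    ∃ A : Subgroup K, A.Normal ∧ (∀ x y : A, x * y = y * x) ∧ A.index ≤ J := by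
  have hrf : Finite f.range := Finite.of_surjective f.rangeRestrict f.rangeRestrict_surjective
  obtain ⟨A, hAn, hAab, hAJ⟩ := hN f.range hrf
  let e : K ≃* f.range := MonoidHom.ofInjective hf
  refine ⟨A.comap e.toMonoidHom, Subgroup.Normal.comap hAn _, ?_, ?_⟩
  · intro x y
    have := hAab ⟨e x.1, x.2⟩ ⟨e y.1, y.2⟩
    have h2 : e (x.1 * y.1) = e (y.1 * x.1) := by
      simpa [map_mul, Subtype.ext_iff] using this
    exact Subtype.ext (e.injective h2)
  · have heq : (A.comap e.toMonoidHom).index = A.index :=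
      Subgroup.index_comap_of_surjective (f := e.toMonoidHom) A
        (fun y => ⟨e.symm y, by simp⟩)
    rw [heq]; exact hAJ

theorem stmt_2 (G : Type*) [Group G] (N : Subgroup G) [N.Normal]
    (hN : JordanGroup N) (hQ : HasBoundedFiniteSubgroups (G ⧸ N)) :
    JordanGroup G := by
  obtain ⟨J, hJ⟩ := hN
  obtain ⟨B, hB⟩ := hQ
  refine ⟨Nat.factorial (J * B), fun H hH => ?_⟩
  -- K = H ∩ N as a subgroup of H
  set K : Subgroup H := N.subgroupOf H with hK
  have hKfin : Finite K := Subgroup.instFiniteSubtypeMem K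
  -- K embeds into N
  let f : K →* N :=
    { toFun := fun k => ⟨(k.1 : G), k.2⟩
      map_one' := rfl
      map_mul' := fun _ _ => rfl }
  have hf : Function.Injective f := by
    intro a b hab
    have h0 := Subtype.ext_iff.mp hab
    have h : ((a : ↥H) : G) = ((b : ↥H) : G) := h0
    exact Subtype.ext (Subtype.ext h)
  obtain ⟨A, hAn, hAab, hAJ⟩ := jordan_pull hJ f hf
  -- push A up to H
  set A' : Subgroup H := A.map K.subtype with hA'
  -- index of K in H is bounded by B
  have hKB : K.index ≤ B := by
    let g : H →* G ⧸ N := (QuotientGroup.mk' N).comp H.subtype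
    have hker : g.ker = K := by
      rw [hK]
      ext x
      simp [g, Subgroup.mem_subgroupOf, QuotientGroup.eq_one_iff]
    have hrange : Finite g.range :=
      Finite.of_surjective g.rangeRestrict g.rangeRestrict_surjective
    calc K.index = Nat.card g.range := by rw [← hker, Subgroup.index_ker]
      _ ≤ B := hB g.range hrange
  -- index of A' in H
  have hA'idx : A'.index ≤ J * B := by
    have hmap : A'.index = (A ⊔ K.subtype.ker).index * K.subtype.range.index :=
      A.index_map K.subtype
    rw [Subgroup.ker_subtype, Subgroup.range_subtype, sup_bot_eq] at hmap
    rw [hmap]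
    exact Nat.mul_le_mul hAJ hKB
  -- A' is abelian
  have hA'ab : ∀ x y : A', (x : H) * y = y * x := by
    rintro ⟨x, hx⟩ ⟨y, hy⟩
    rw [hA'] at hx hy
    obtain ⟨a, ha, rfl⟩ := hx
    obtain ⟨b, hb, rfl⟩ := hy
    have := hAab ⟨a, ha⟩ ⟨b, hb⟩
    have h2 : (⟨a, ha⟩ * ⟨b, hb⟩ : A).1.1 = (⟨b, hb⟩ * ⟨a, ha⟩ : A).1.1 := by rw [this]
    exact h2
  -- take the normal core
  refine ⟨A'.normalCore, Subgroup.normalCore_normal A', ?_, ?_⟩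
  · intro x y
    have hx := Subgroup.normalCore_le A' x.2
    have hy := Subgroup.normalCore_le A' y.2
    have := hA'ab ⟨x.1, hx⟩ ⟨y.1, hy⟩
    exact Subtype.ext this
  · have hcore : A'.normalCore = (MulAction.toPermHom H (H ⧸ A')).ker :=
      Subgroup.normalCore_eq_ker A'
    have h1 : A'.normalCore.index = Nat.card (MulAction.toPermHom H (H ⧸ A')).range := by
      rw [hcore, Subgroup.index_ker]
    have h2 : Nat.card (MulAction.toPermHom H (H ⧸ A')).range
        ≤ Nat.card (Equiv.Perm (H ⧸ A')) :=
      Nat.card_le_card_of_injective _ Subtype.val_injective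
    have h3 : Nat.card (Equiv.Perm (H ⧸ A')) = Nat.factorial (Nat.card (H ⧸ A')) := by
      have : DecidableEq (H ⧸ A') := Classical.decEq _
      have : Fintype (H ⧸ A') := Fintype.ofFinite _
      rw [Nat.card_eq_fintype_card, Nat.card_eq_fintype_card, Fintype.card_perm]
    have h4 : Nat.card (H ⧸ A') = A'.index := rfl
    rw [h1]
    calc Nat.card (MulAction.toPermHom H (H ⧸ A')).range
        ≤ Nat.card (Equiv.Perm (H ⧸ A')) := h2
      _ = Nat.factorial A'.index := by rw [h3, h4]
      _ ≤ Nat.factorial (J * B) := Nat.factorial_le hA'idx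
end

section
/- If a group G is Jordan and a group H has bounded finite subgroups, then the direct product G × H is Jordan. -/
section Aux

variable {M P : Type*} [Group M] [Group P]

lemma comm_map (f : M →* P) (A : Subgroup M) (h : ∀ x y : A, x * y = y * x) :
    ∀ x y : A.map f, x * y = y * x := by
  rintro ⟨x, a, ha, rfl⟩ ⟨y, b, hb, rfl⟩
  have h2 : a * b = b * a := congrArg Subtype.val (h ⟨a, ha⟩ ⟨b, hb⟩)
  refine Subtype.ext ?_
  show f a * f b = f b * f a
  rw [← map_mul, ← map_mul, h2]

lemma comm_of_le {A C : Subgroup M} (hle : C ≤ A) (h : ∀ x y : A, x * y = y * x) :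
    ∀ x y : C, x * y = y * x := by
  intro x y
  have h2 : (x : M) * y = (y : M) * x :=
    congrArg Subtype.val (h ⟨x, hle x.2⟩ ⟨y, hle y.2⟩)
  exact Subtype.ext h2

lemma comm_comap_equiv (e : M ≃* P) (A : Subgroup P) (h : ∀ x y : A, x * y = y * x) :
    ∀ x y : A.comap (e : M →* P), x * y = y * x := by
  intro x y
  have h2 : e x * e y = e y * e x :=
    congrArg Subtype.val (h ⟨e x, x.2⟩ ⟨e y, y.2⟩)
  have h3 : (x : M) * y = (y : M) * x := e.injective (by rw [map_mul, map_mul, h2])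
  exact Subtype.ext h3

lemma index_normalCore_le (A : Subgroup M) [Finite M] :
    A.normalCore.index ≤ A.index.factorial := by
  classical
  have : Fintype (M ⧸ A) := Fintype.ofFinite _
  calc A.normalCore.index = Nat.card (MulAction.toPermHom M (M ⧸ A)).range := by
        rw [Subgroup.normalCore_eq_ker, Subgroup.index_ker]
    _ ≤ Nat.card (Equiv.Perm (M ⧸ A)) := Nat.card_le_card_of_injective _ Subtype.val_injective
    _ = (Nat.card (M ⧸ A)).factorial := by
        rw [Nat.card_eq_fintype_card, Nat.card_eq_fintype_card, Fintype.card_perm]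
    _ = A.index.factorial := rfl

end Aux

theorem stmt_6 (G H : Type*) [Group G] [Group H]
    (hG : JordanGroup G) (hH : HasBoundedFiniteSubgroups H) :
    JordanGroup (G × H) := by
  obtain ⟨J, hJ⟩ := hG
  obtain ⟨B, hB⟩ := hH
  refine ⟨(J * B).factorial, ?_⟩
  intro K hK
  -- project to `H`; its kernel `N` sits inside `G × {1}`
  set φ : K →* H := (MonoidHom.snd G H).comp K.subtype with hφdef
  set N : Subgroup K := φ.ker with hNdef
  have hNindex : N.index ≤ B := by
    rw [hNdef, Subgroup.index_ker]
    exact hB φ.range (Set.finite_range φ |>.to_subtype)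
  -- embed `N` into `G`
  set ψ : N →* G := (MonoidHom.fst G H).comp (K.subtype.comp N.subtype) with hψdef
  have hψinj : Function.Injective ψ := by
    intro a b hab
    have ha : (((a : K) : G × H)).2 = 1 := a.2
    have hb : (((b : K) : G × H)).2 = 1 := b.2
    exact Subtype.ext (Subtype.ext (Prod.ext hab (ha.trans hb.symm)))
  have hrfin : Finite ψ.range := Set.finite_range ψ |>.to_subtype
  obtain ⟨A, hAnorm, hAcomm, hAindex⟩ := hJ ψ.range hrfin
  set e : N ≃* ψ.range := MonoidHom.ofInjective hψinj with hedef
  set A₀ : Subgroup N := A.comap (e : N →* ψ.range) with hA₀def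
  have hA₀comm : ∀ x y : A₀, x * y = y * x := comm_comap_equiv e A hAcomm
  have hA₀index : A₀.index ≤ J := by
    exact (Subgroup.index_comap_of_surjective A e.surjective).le.trans hAindex
  set A₁ : Subgroup K := A₀.map N.subtype with hA₁def
  have hA₁le : A₁ ≤ N := Subgroup.map_subtype_le A₀
  have hA₁comm : ∀ x y : A₁, x * y = y * x := comm_map N.subtype A₀ hA₀comm
  have hA₁index : A₁.index ≤ J * B := by
    have h1 : A₁.relIndex N * N.index = A₁.index := Subgroup.relIndex_mul_index hA₁le
    have h2 : A₁.relIndex N = A₀.index := by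
      unfold Subgroup.relIndex
      rw [hA₁def, Subgroup.subgroupOf, Subgroup.comap_map_eq_self_of_injective N.subtype_injective]
    rw [← h1, h2]
    exact Nat.mul_le_mul hA₀index hNindex
  refine ⟨A₁.normalCore, Subgroup.normalCore_normal A₁, ?_, ?_⟩
  · exact comm_of_le A₁.normalCore_le hA₁comm
  · calc A₁.normalCore.index ≤ A₁.index.factorial := index_normalCore_le A₁
      _ ≤ (J * B).factorial := Nat.factorial_le hA₁index
end

section
/- Minkowski's theorem: for each n there exists M(n) ∈ ℕ such that every finite subgroup of GL_n(ℚ) has order at most M(n); that is, GL_n(ℚ) has bounded finite subgroups. -/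
/-!
A finite group `G ≤ GL_n(ℚ)` preserves the `ℤ`-lattice spanned by the `G`-orbit of a basis, so it
embeds in `GL_n(ℤ)`. There, reduction modulo `2` and modulo `3` is jointly injective on `G`. Indeed,
if `A ≡ 1 (mod p)` and `A ^ q = 1` with `p ∤ q`, then `N = 1 + A + ⋯ + A ^ (q - 1) ≡ q (mod p)`
has nonzero determinant while `N (A - 1) = 0`, so `A = 1`. For `A` of order `2 ^ e * m` with `m`
odd this gives first `A ^ 2 ^ e = 1`, using `p = 2`, and then `A = 1`, using `p = 3`. Hence
`|G| ≤ 6 ^ (n ^ 2)`.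
-/

open Module

namespace Matrix

variable {ι : Type*} [Fintype ι] [DecidableEq ι]

theorem eq_one_of_pow_eq_one_of_coprime {p q : ℕ} (hp : p ≠ 1) (hqp : q.Coprime p)
    {A : Matrix ι ι ℤ} (hA : A ^ q = 1) (hAp : (Int.castRingHom (ZMod p)).mapMatrix A = 1) :
    A = 1 := by
  set N := ∑ i ∈ Finset.range q, A ^ i
  have hgeom : N * (A - 1) = 0 := by rw [geom_sum_mul, hA, sub_self]
  have hN : (Int.castRingHom (ZMod p)).mapMatrix N = diagonal fun _ ↦ (q : ZMod p) := by
    simp only [N, map_sum, map_pow, hAp, one_pow, Finset.sum_const, Finset.card_range,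
      nsmul_eq_mul, mul_one, diagonal_natCast]
  have hdet : N.det ≠ 0 := by
    have : Nontrivial (ZMod p) := ZMod.nontrivial_iff.mpr hp
    refine fun h ↦ ((ZMod.unitOfCoprime q hqp).isUnit.pow (Fintype.card ι)).ne_zero ?_
    have := congrArg (Int.castRingHom (ZMod p)) h
    rwa [RingHom.map_det, hN, det_diagonal, Finset.prod_const, map_zero] at this
  have : N.det • (A - 1) = 0 := by
    rw [← smul_one_mul, ← adjugate_mul, Matrix.mul_assoc, hgeom, Matrix.mul_zero]
  exact sub_eq_zero.mp ((smul_eq_zero.mp this).resolve_left hdet)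

theorem eq_one_of_isOfFinOrder_of_map_eq_one {p p' : ℕ} (hp : p.Prime) (hp' : p' ≠ 1)
    (hpp' : p.Coprime p') {A : Matrix ι ι ℤ} (hA : IsOfFinOrder A)
    (h : (Int.castRingHom (ZMod p)).mapMatrix A = 1)
    (h' : (Int.castRingHom (ZMod p')).mapMatrix A = 1) : A = 1 := by
  obtain ⟨e, m, hpm, hk⟩ := Nat.exists_eq_pow_mul_and_not_dvd hA.orderOf_pos.ne' p hp.ne_one
  have hpe : A ^ p ^ e = 1 := by
    refine eq_one_of_pow_eq_one_of_coprime hp.ne_one ((hp.coprime_iff_not_dvd.mpr hpm).symm) ?_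
      (by rw [map_pow, h, one_pow])
    rw [← pow_mul, ← hk, pow_orderOf_eq_one]
  exact eq_one_of_pow_eq_one_of_coprime hp' (hpp'.pow_left e) hpe h'

theorem card_le_six_pow_of_injective {G : Type*} [Group G] [Finite G] (f : G →* Matrix ι ι ℤ)
    (hf : Function.Injective f) : Nat.card G ≤ 6 ^ (Fintype.card ι ^ 2) := by
  let red : G →* Matrix ι ι (ZMod 2) × Matrix ι ι (ZMod 3) :=
    ((Int.castRingHom (ZMod 2)).mapMatrix.toMonoidHom.comp f).prod
      ((Int.castRingHom (ZMod 3)).mapMatrix.toMonoidHom.comp f)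
  have hred : Function.Injective red := by
    refine (injective_iff_map_eq_one red).mpr fun x hx ↦ hf ?_
    rw [map_one]
    exact eq_one_of_isOfFinOrder_of_map_eq_one Nat.prime_two (by norm_num) (by norm_num)
      (f.isOfFinOrder (isOfFinOrder_of_finite x)) (congrArg Prod.fst hx) (congrArg Prod.snd hx)
  calc Nat.card G ≤ Nat.card (Matrix ι ι (ZMod 2) × Matrix ι ι (ZMod 3)) :=
        Nat.card_le_card_of_injective red hred
    _ = 6 ^ (Fintype.card ι ^ 2) := by
        change Nat.card ((ι → ι → ZMod 2) × (ι → ι → ZMod 3)) = _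
        rw [Nat.card_prod, Nat.card_fun, Nat.card_fun, Nat.card_fun, Nat.card_fun, Nat.card_zmod,
          Nat.card_zmod, Nat.card_eq_fintype_card, ← pow_mul, ← pow_mul, ← mul_pow, sq]
        rfl

end Matrix

section InvariantLattice

variable {V : Type*} [AddCommGroup V] [Module ℚ V] [FiniteDimensional ℚ V]
  {G : Type*} [Group G] (ρ : G →* Module.End ℚ V)

def invariantLattice : Submodule ℤ V :=
  Submodule.span ℤ (Set.range fun x : G × Fin (finrank ℚ V) ↦ ρ x.1 (finBasis ℚ V x.2))

lemma finBasis_mem_invariantLattice (i : Fin (finrank ℚ V)) :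
    finBasis ℚ V i ∈ invariantLattice ρ :=
  Submodule.subset_span ⟨(1, i), by simp⟩

lemma mapsTo_invariantLattice (g : G) :
    Set.MapsTo ((ρ g).restrictScalars ℤ) (invariantLattice ρ) (invariantLattice ρ) := by
  refine fun v hv ↦ (Submodule.map_span_le _ _ _).mpr ?_ (Submodule.mem_map_of_mem hv)
  rintro _ ⟨⟨h, i⟩, rfl⟩
  exact Submodule.subset_span ⟨(g * h, i), by simp⟩

instance [Finite G] : (invariantLattice ρ).IsLattice ℚ where
  fg := Submodule.fg_span (Set.finite_range _)
  span_eq_top := by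
    rw [invariantLattice, Submodule.span_span_of_tower, eq_top_iff, ← (finBasis ℚ V).span_eq]
    exact Submodule.span_mono (Set.range_subset_iff.mpr fun i ↦ ⟨(1, i), by simp⟩)

def invariantLatticeAction : G →* Module.End ℤ (invariantLattice ρ) where
  toFun g := ((ρ g).restrictScalars ℤ).restrict (mapsTo_invariantLattice ρ g)
  map_one' := by ext; simp
  map_mul' g h := by ext; simp only [map_mul]; rfl

lemma injective_invariantLatticeAction (hρ : Function.Injective ρ) :
    Function.Injective (invariantLatticeAction ρ) := by
  intro g h hgh
  refine hρ ((finBasis ℚ V).ext fun i ↦ ?_)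
  exact congrArg Subtype.val (LinearMap.congr_fun hgh ⟨_, finBasis_mem_invariantLattice ρ i⟩)

theorem exists_injective_monoidHom_matrix_int [Finite G] (hρ : Function.Injective ρ) :
    ∃ ψ : G →* Matrix (Fin (finrank ℚ V)) (Fin (finrank ℚ V)) ℤ, Function.Injective ψ := by
  let b := finBasisOfFinrankEq ℤ (invariantLattice ρ)
    (congrArg Cardinal.toNat (Submodule.IsLattice.rank' ℚ (invariantLattice ρ)))
  exact ⟨(LinearMap.toMatrixAlgEquiv b).toMonoidHom.comp (invariantLatticeAction ρ),
    (LinearMap.toMatrixAlgEquiv b).injective.comp (injective_invariantLatticeAction ρ hρ)⟩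

end InvariantLattice

theorem stmt_8 (n : ℕ) : HasBoundedFiniteSubgroups (Matrix.GeneralLinearGroup (Fin n) ℚ) := by
  refine ⟨6 ^ (n ^ 2), fun H _ ↦ ?_⟩
  let ρ : H →* Module.End ℚ (Fin n → ℚ) :=
    Matrix.toLinAlgEquiv'.toMonoidHom.comp ((Units.coeHom _).comp H.subtype)
  have hρ : Function.Injective ρ :=
    Matrix.toLinAlgEquiv'.injective.comp (Units.val_injective.comp Subtype.val_injective)
  obtain ⟨ψ, hψ⟩ := exists_injective_monoidHom_matrix_int ρ hρ
  simpa using Matrix.card_le_six_pow_of_injective ψ hψ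
end

section
/- Let V be a finite-dimensional vector space over ℚ and let a group G act linearly on V. Let G_τ = {g ∈ G : g acts as the identity on V} be the kernel of the action. If G_τ is Jordan, then G is Jordan. -/
/-
Let `H ≤ G` be finite. Its intersection `K` with `ker ρ` has index at most the largest order `B`
of a finite subgroup of `GL(V)`, an abelian subgroup of `K` of index `≤ J` has index `≤ J * B`
in `H`, and the normal core of that subgroup has index `≤ (J * B)!`.

The bound `B` is Minkowski's: a finite subgroup of `GL(V)` preserves the `ℤ`-lattice spanned
by the orbit of a basis, so it embeds into `GL_n(ℤ)`, and reduction mod `3` is injective on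
it. Indeed if `M ^ p = 1` with `p` prime and `M = 1 + 3 ^ k * N`, `k ≥ 1`, expanding the
binomial shows `3 ∣ N`; so `M - 1` is divisible by every power of `3`, i.e. `M = 1`.
-/

theorem Subgroup.index_normalCore_dvd_factorial {G : Type*} [Group G] (H : Subgroup G)
    [H.FiniteIndex] : H.normalCore.index ∣ H.index.factorial := by
  rw [normalCore_eq_ker, index_ker, index_eq_card, ← Nat.card_perm]
  exact card_subgroup_dvd_card _

lemma Subgroup.isMulCommutative_of_le {G : Type*} [Group G] {H K : Subgroup G} (hle : H ≤ K)
    [IsMulCommutative K] : IsMulCommutative H :=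
  .of_setLike_mul_comm fun x hx y hy ↦
    congrArg Subtype.val (mul_comm' (⟨x, hle hx⟩ : K) ⟨y, hle hy⟩)

lemma JordanGroupWith.exists_isMulCommutative_index_le {K G : Type*} [Group K] [Group G]
    [Finite K] {J : ℕ} (hG : JordanGroupWith G J) {f : K →* G} (hf : Function.Injective f) :
    ∃ A : Subgroup K, IsMulCommutative A ∧ A.index ≤ J := by
  obtain ⟨A, -, hcomm, hidx⟩ := hG f.range (.of_surjective _ f.rangeRestrict_surjective)
  have : IsMulCommutative A := ⟨⟨hcomm⟩⟩
  let e := MonoidHom.ofInjective hf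
  exact ⟨A.comap e.toMonoidHom, A.comap_injective_isMulCommutative e.injective,
    (Subgroup.index_comap_of_surjective _ e.surjective).trans_le hidx⟩

theorem JordanGroup.of_ker {G G' : Type*} [Group G] [Group G'] (f : G →* G')
    (hker : JordanGroup f.ker) (hG' : HasBoundedFiniteSubgroups G') : JordanGroup G := by
  obtain ⟨J, hJ⟩ := hker
  obtain ⟨B, hB⟩ := hG'
  refine ⟨(J * B).factorial, fun H _ ↦ ?_⟩
  let K := (f.comp H.subtype).ker
  have hK : K.index ≤ B := by
    rw [Subgroup.index_ker]
    exact hB _ (.of_surjective _ (f.comp H.subtype).rangeRestrict_surjective)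
  let ι : K →* f.ker := (H.subtype.comp K.subtype).codRestrict f.ker fun x ↦ x.2
  have hι : Function.Injective ι := fun x y h ↦
    Subtype.ext (Subtype.ext (congrArg (fun z : f.ker ↦ (z : G)) h))
  obtain ⟨A, _, hA⟩ := hJ.exists_isMulCommutative_index_le hι
  let A' := A.map K.subtype
  have hA' : A'.index ≤ J * B := (Subgroup.index_map_subtype A).trans_le (Nat.mul_le_mul hA hK)
  have : IsMulCommutative A'.normalCore := Subgroup.isMulCommutative_of_le A'.normalCore_le
  refine ⟨A'.normalCore, A'.normalCore_normal, mul_comm', ?_⟩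
  exact (Nat.le_of_dvd (Nat.factorial_pos _) A'.index_normalCore_dvd_factorial).trans
    (Nat.factorial_le hA')

lemma three_dvd_of_one_add_three_pow_mul_pow_eq_one {R : Type*} [CommRing R]
    (h3 : IsLeftRegular (3 : R)) {p r : ℕ} (hp : p.Prime) {b : R}
    (hb : (1 + 3 ^ (r + 1) * b) ^ p = 1) : 3 ∣ b := by
  have hq : IsLeftRegular ((3 : R) ^ (r + 1)) := h3.pow _
  by_cases hp3 : p = 3
  · subst hp3
    have h : 3 ^ (r + 1) * 3 * (b + 3 ^ (r + 1) * b ^ 2 + 3 ^ (2 * r + 1) * b ^ 3)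
        = 3 ^ (r + 1) * 3 * 0 := by
      linear_combination hb
    have hb' := (hq.mul h3) h
    exact ⟨-(3 ^ r * b ^ 2 + 3 ^ (2 * r) * b ^ 3), by linear_combination hb'⟩
  · obtain ⟨c, hc⟩ := sq_dvd_add_pow_sub_sub (3 ^ (r + 1) * b) 1 p
    have h : 3 ^ (r + 1) * (p * b + 3 ^ (r + 1) * b ^ 2 * c) = 3 ^ (r + 1) * 0 := by
      linear_combination hb - hc
    have hpb : 3 ∣ b * p := ⟨-(3 ^ r * b ^ 2 * c), by linear_combination hq h⟩
    have hcop : IsCoprime (3 : R) p := by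
      have : IsCoprime ((3 : ℕ) : ℤ) p := Nat.isCoprime_iff_coprime.mpr
        ((Nat.coprime_primes Nat.prime_three hp).mpr (Ne.symm hp3))
      simpa using this.map (Int.castRingHom R)
    exact hcop.dvd_of_dvd_mul_right hpb

open scoped IsMulCommutative in
lemma three_pow_succ_dvd_of_one_add_pow_eq_one {R : Type*} [Ring R] (h3 : IsLeftRegular (3 : R))
    {p : ℕ} (hp : p.Prime) {a : R} (ha : (1 + a) ^ p = 1) (h3a : 3 ∣ a) (n : ℕ) :
    3 ^ (n + 1) ∣ a := by
  induction n with
  | zero => simpa using h3a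
  | succ n ih =>
    obtain ⟨b, rfl⟩ := ih
    -- the divisibility argument needs commutativity, so run it in `ℤ[b]`
    let S := Algebra.adjoin ℤ {b}
    let b' : S := ⟨b, Algebra.self_mem_adjoin_singleton ℤ b⟩
    have h3S : IsLeftRegular (3 : S) := fun x y h ↦ Subtype.ext (h3 (congrArg Subtype.val h))
    have hb' : (1 + 3 ^ (n + 1) * b') ^ p = 1 := Subtype.ext ha
    obtain ⟨c, hc⟩ := map_dvd S.val (three_dvd_of_one_add_three_pow_mul_pow_eq_one h3S hp hb')
    replace hc : b = 3 * c := by simpa [b', map_ofNat] using hc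
    exact ⟨c, by rw [hc, ← mul_assoc, ← pow_succ]⟩

lemma eq_one_of_pow_eq_one_of_three_dvd_sub_one {R : Type*} [Ring R] (h3 : IsLeftRegular (3 : R))
    (hsep : ∀ a : R, (∀ n, 3 ^ n ∣ a) → a = 0) {m : ℕ} (hm : m ≠ 0) {x : R} (hx : x ^ m = 1)
    (h3x : 3 ∣ x - 1) : x = 1 := by
  induction m using Nat.recOnMul generalizing x with
  | zero => exact absurd rfl hm
  | one => simpa using hx
  | prime p hp =>
    have hsub : x - 1 = 0 := hsep _ fun
      | 0 => by simp
      | n + 1 => three_pow_succ_dvd_of_one_add_pow_eq_one h3 hp (by simpa using hx) h3x n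
    exact sub_eq_zero.mp hsub
  | mul a b iha ihb =>
    rw [pow_mul] at hx
    have hxa := ihb (right_ne_zero_of_mul hm) hx (h3x.trans (sub_one_dvd_pow_sub_one x a))
    exact iha (left_ne_zero_of_mul hm) hxa h3x

namespace Matrix

variable {ι : Type*} [Fintype ι] [DecidableEq ι]

lemma three_pow_mul (A : Matrix ι ι ℤ) (n : ℕ) :
    (3 : Matrix ι ι ℤ) ^ n * A = (3 ^ n : ℤ) • A := by
  rw [Algebra.smul_def]; simp

lemma isLeftRegular_three : IsLeftRegular (3 : Matrix ι ι ℤ) := fun A B h ↦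
  smul_right_injective _ (three_ne_zero (α := ℤ)) (by simpa [Algebra.smul_def] using h)

lemma eq_zero_of_forall_three_pow_dvd {A : Matrix ι ι ℤ} (h : ∀ n, (3 : Matrix ι ι ℤ) ^ n ∣ A) :
    A = 0 := by
  ext i j
  obtain ⟨B, hB⟩ := h (A i j).natAbs
  have hdvd : (3 : ℤ) ^ (A i j).natAbs ∣ A i j :=
    ⟨B i j, congrFun (congrFun (hB.trans (three_pow_mul B _)) i) j⟩
  refine Int.eq_zero_of_abs_lt_dvd hdvd ?_
  rw [Int.abs_eq_natAbs]
  exact_mod_cast Nat.lt_pow_self (by norm_num)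

lemma three_dvd_of_mapMatrix_eq_zero {A : Matrix ι ι ℤ}
    (h : (Int.castRingHom (ZMod 3)).mapMatrix A = 0) : 3 ∣ A := by
  refine ⟨of fun i j ↦ A i j / 3, ?_⟩
  ext i j
  have hij : (3 : ℤ) ∣ A i j :=
    (ZMod.intCast_zmod_eq_zero_iff_dvd _ 3).mp (congrFun (congrFun h i) j)
  rw [← pow_one (3 : Matrix ι ι ℤ), three_pow_mul, smul_apply, of_apply, pow_one, smul_eq_mul,
    Int.mul_ediv_cancel' hij]

theorem card_le_three_pow_of_injective {H : Type*} [Group H] [Finite H] (φ : H →* Matrix ι ι ℤ)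
    (hφ : Function.Injective φ) : Nat.card H ≤ 3 ^ (Fintype.card ι * Fintype.card ι) := by
  let π : Matrix ι ι ℤ →+* Matrix ι ι (ZMod 3) := (Int.castRingHom (ZMod 3)).mapMatrix
  let ψ : H →* Matrix ι ι (ZMod 3) := (π : Matrix ι ι ℤ →* Matrix ι ι (ZMod 3)).comp φ
  have hψ : Function.Injective ψ := by
    refine (injective_iff_map_eq_one ψ).mpr fun k hk ↦ hφ ?_
    rw [map_one]
    refine eq_one_of_pow_eq_one_of_three_dvd_sub_one isLeftRegular_three
      (fun _ ↦ eq_zero_of_forall_three_pow_dvd) Nat.card_pos.ne'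
      (by rw [← map_pow, pow_card_eq_one', map_one]) (three_dvd_of_mapMatrix_eq_zero ?_)
    rw [map_sub, map_one]
    exact sub_eq_zero.mpr hk
  calc Nat.card H ≤ Nat.card (Matrix ι ι (ZMod 3)) := Nat.card_le_card_of_injective ψ hψ
    _ = 3 ^ (Fintype.card ι * Fintype.card ι) := by
      simp [Nat.card_eq_fintype_card, Matrix, pow_mul]

end Matrix

section Lattice

variable {V : Type*} [AddCommGroup V] [Module ℚ V]

lemma finrank_int_le_finrank_rat [FiniteDimensional ℚ V] (L : Submodule ℤ V)
    [Module.Finite ℤ L] : Module.finrank ℤ L ≤ Module.finrank ℚ V := by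
  have : IsAddTorsionFree V := IsAddTorsionFree.of_module_rat V
  have hli := (Module.finBasis ℤ L).linearIndependent.map' L.subtype L.ker_subtype
  simpa using ((LinearIndependent.iff_fractionRing ℤ ℚ).mp hli).fintype_card_le_finrank

lemma exists_stable_lattice [FiniteDimensional ℚ V] (H : Subgroup (V ≃ₗ[ℚ] V)) [Finite H] :
    ∃ L : Submodule ℤ V, Module.Finite ℤ L ∧ (∀ g ∈ H, ∀ x ∈ L, g x ∈ L) ∧
      Submodule.span ℚ (L : Set V) = ⊤ := by
  let b := Module.finBasis ℚ V
  let L := Submodule.span ℤ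
    (Set.range fun p : H × Fin (Module.finrank ℚ V) ↦ (p.1 : V ≃ₗ[ℚ] V) (b p.2))
  refine ⟨L, Module.Finite.span_of_finite ℤ (Set.finite_range _), fun g hg x hx ↦ ?_, ?_⟩
  · have hle : L.map ((g : V →ₗ[ℚ] V).restrictScalars ℤ) ≤ L := by
      rw [Submodule.map_span_le]
      rintro _ ⟨⟨h, i⟩, rfl⟩
      exact Submodule.subset_span ⟨(⟨g, hg⟩ * h, i), rfl⟩
    exact hle ⟨x, hx, rfl⟩
  · refine eq_top_iff.mpr (b.span_eq ▸ Submodule.span_mono ?_)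
    rintro _ ⟨i, rfl⟩
    exact Submodule.subset_span ⟨(1, i), rfl⟩

def Subgroup.restrictLattice (H : Subgroup (V ≃ₗ[ℚ] V)) (L : Submodule ℤ V)
    (hL : ∀ g ∈ H, ∀ x ∈ L, g x ∈ L) : H →* Module.End ℤ L where
  toFun g := ((g : V →ₗ[ℚ] V).restrictScalars ℤ).restrict (hL g g.2)
  map_one' := rfl
  map_mul' _ _ := rfl

lemma Subgroup.restrictLattice_injective (H : Subgroup (V ≃ₗ[ℚ] V)) (L : Submodule ℤ V)
    (hL : ∀ g ∈ H, ∀ x ∈ L, g x ∈ L) (hspan : Submodule.span ℚ (L : Set V) = ⊤) :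
    Function.Injective (H.restrictLattice L hL) := by
  intro g h hgh
  refine Subtype.ext (LinearEquiv.toLinearMap_injective (LinearMap.ext_on hspan fun x hx ↦ ?_))
  exact congrArg Subtype.val (LinearMap.congr_fun hgh ⟨x, hx⟩)

theorem hasBoundedFiniteSubgroupsWith_linearEquiv [FiniteDimensional ℚ V] :
    HasBoundedFiniteSubgroupsWith (V ≃ₗ[ℚ] V)
      (3 ^ (Module.finrank ℚ V * Module.finrank ℚ V)) := by
  intro H _
  have : IsAddTorsionFree V := .of_module_rat V
  obtain ⟨L, _, hL, hspan⟩ := exists_stable_lattice H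
  let c := Module.finBasis ℤ L
  let φ := (LinearMap.toMatrixAlgEquiv c).toRingEquiv.toMonoidHom.comp (H.restrictLattice L hL)
  have hφ : Function.Injective φ :=
    (LinearMap.toMatrixAlgEquiv c).injective.comp (H.restrictLattice_injective L hL hspan)
  have hrank := finrank_int_le_finrank_rat L
  calc Nat.card H ≤ 3 ^ (Module.finrank ℤ L * Module.finrank ℤ L) := by
        simpa using Matrix.card_le_three_pow_of_injective φ hφ
    _ ≤ 3 ^ (Module.finrank ℚ V * Module.finrank ℚ V) :=
        Nat.pow_le_pow_right (by norm_num) (Nat.mul_le_mul hrank hrank)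

end Lattice

theorem stmt_10 (G V : Type*) [Group G] [AddCommGroup V] [Module ℚ V]
    [FiniteDimensional ℚ V] (ρ : G →* (V ≃ₗ[ℚ] V))
    (hker : JordanGroup ρ.ker) : JordanGroup G :=
  JordanGroup.of_ker ρ hker ⟨_, hasBoundedFiniteSubgroupsWith_linearEquiv⟩
end

section
/- If a homomorphism φ : G → K of groups has Jordan kernel and K has bounded finite subgroups, then G is Jordan. -/
/-- Index of the normal core is at most the factorial of the index, for finite groups. -/
lemma index_normalCore_le_factorial {G : Type*} [Group G] [Finite G] (H : Subgroup G) :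
    H.normalCore.index ≤ (H.index).factorial := by
  classical
  have := Fintype.ofFinite G
  rw [Subgroup.normalCore_eq_ker, Subgroup.index_ker]
  calc Nat.card (MulAction.toPermHom G (G ⧸ H)).range
      ≤ Nat.card (Equiv.Perm (G ⧸ H)) := by
        exact Nat.card_le_card_of_injective _ Subtype.val_injective
    _ = (Nat.card (G ⧸ H)).factorial := by
        simp [Nat.card_eq_fintype_card, Fintype.card_perm]
    _ = (H.index).factorial := by rw [Subgroup.index_eq_card]

theorem stmt_14 (G K : Type*) [Group G] [Group K] (φ : G →* K)
    (hker : JordanGroup φ.ker) (hK : HasBoundedFiniteSubgroups K) :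
    JordanGroup G := by
  obtain ⟨J, hJ⟩ := hker
  obtain ⟨B, hB⟩ := hK
  refine ⟨(J * B).factorial, fun H hH => ?_⟩
  classical
  -- restriction of φ to H
  set ψ := φ.comp H.subtype with hψ
  set N := ψ.ker with hN
  -- the image of H in K is finite of card ≤ B
  have hNfin : Finite N := Subgroup.instFiniteSubtypeMem N
  have hNidx : N.index ≤ B := by
    rw [Subgroup.index_ker]
    exact hB ψ.range (Set.Finite.to_subtype (Set.finite_range _))
  -- N embeds into ker φ
  have hmem : ∀ x : N, φ ((x : H) : G) = 1 := fun x => x.2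
  let ι : N →* φ.ker := {
    toFun := fun x => ⟨(x : H), hmem x⟩
    map_one' := rfl
    map_mul' := fun x y => rfl }
  have hι : Function.Injective ι := by
    intro x y h
    have h2 : (ι x : G) = (ι y : G) := congrArg Subtype.val h
    exact Subtype.ext (Subtype.ext h2)
  have hrfin : Finite ι.range := Set.Finite.to_subtype (Set.finite_range _)
  obtain ⟨A'', hA''norm, hA''comm, hA''idx⟩ := hJ ι.range hrfin
  -- pull A'' back to N via the isomorphism
  let e : N ≃* ι.range := MonoidHom.ofInjective hι
  let A' : Subgroup N := A''.comap (e : N →* ι.range)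
  have hA'idx : A'.index ≤ J := by
    have := Subgroup.index_comap_of_surjective A'' (f := (e : N →* ι.range))
      e.surjective
    rw [show A' = A''.comap (e : N →* ι.range) from rfl, this]
    exact hA''idx
  have hA'comm : ∀ x y : A', (x : N) * y = y * x := by
    intro x y
    have hx : e x.1 ∈ A'' := x.2
    have hy : e y.1 ∈ A'' := y.2
    have := hA''comm ⟨e x.1, hx⟩ ⟨e y.1, hy⟩
    have h2 : e (x.1 * y.1) = e (y.1 * x.1) := by
      rw [map_mul, map_mul]
      exact congrArg Subtype.val this
    exact e.injective h2
  -- push A' into H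
  let A : Subgroup H := A'.map N.subtype
  have hAcomm : ∀ a ∈ A, ∀ b ∈ A, a * b = b * a := by
    rintro _ ⟨x, hx, rfl⟩ _ ⟨y, hy, rfl⟩
    have := hA'comm ⟨x, hx⟩ ⟨y, hy⟩
    exact congrArg Subtype.val this
  have hAidx : A.index ≤ J * B := by
    have := Subgroup.index_map (H := A') N.subtype
    have hker : N.subtype.ker = ⊥ := N.ker_subtype
    have hrange : N.subtype.range = N := N.range_subtype
    rw [show A = A'.map N.subtype from rfl, this, hker, sup_bot_eq, hrange]
    exact Nat.mul_le_mul hA'idx hNidx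
  -- take the normal core
  refine ⟨A.normalCore, inferInstance, ?_, ?_⟩
  · intro x y
    have hx := A.normalCore_le x.2
    have hy := A.normalCore_le y.2
    exact Subtype.ext (Subtype.ext (congrArg Subtype.val
      (hAcomm _ hx _ hy)))
  · calc A.normalCore.index ≤ (A.index).factorial := index_normalCore_le_factorial A
      _ ≤ (J * B).factorial := Nat.factorial_le hAidx
end
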